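/- Let M be a metric space, F ⊆ C(M) equicontinuous and uniformly bounded on each compact subset, and let P^k be the partition-of-unity operators P^k f = ∑_t f(t) η^k_t subordinated to covers by balls of radius 1/k. Then the set ⋃_{k≥1} {P^k f − f : f ∈ F} ∪ {0} is totally bounded in C(M) with the topology of uniform convergence on compacts. -/

import Mathlib

/-!
For fixed `k`, the family `P^k f - f` (`f ∈ F`) is equicontinuous and pointwise bounded, because
near each point only finitely many `η^k_t` are nonzero; an Arzelà–Ascoli net argument then makes
`{P^k f - f : f ∈ F}` totally bounded on every compact `K`. Since `P^k f x` is a convex combination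
of values `f t` with `dist x t < 1/k`, uniform equicontinuity of `F` near `K` gives
`P^k f - f → 0` uniformly on `K` and in `f`. So for a given `ε` only finitely many `k` need a net,
and the remaining differences lie within `ε` of `0`.
-/

open Filter Topology Metric Set Function

def TotallyBoundedUniformlyOn {M E : Type*} [SeminormedAddCommGroup E] (K : Set M)
    (G : Set (M → E)) : Prop :=
  ∀ ε > 0, ∃ S : Set (M → E), S.Finite ∧ ∀ g ∈ G, ∃ h ∈ S, ∀ x ∈ K, ‖g x - h x‖ ≤ ε

namespace TotallyBoundedUniformlyOn

variable {M E : Type*} [SeminormedAddCommGroup E] {K : Set M}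

theorem biUnion {ι : Type*} {s : Set ι} (hs : s.Finite) {G : ι → Set (M → E)}
    (hG : ∀ i ∈ s, TotallyBoundedUniformlyOn K (G i)) :
    TotallyBoundedUniformlyOn K (⋃ i ∈ s, G i) := by
  intro ε hε
  choose! S hSfin hS using fun i hi => hG i hi ε hε
  refine ⟨⋃ i ∈ s, S i, hs.biUnion hSfin, fun g hg => ?_⟩
  obtain ⟨i, hi, hgi⟩ := mem_iUnion₂.1 hg
  obtain ⟨h, hh, hgh⟩ := hS i hi g hgi
  exact ⟨h, mem_biUnion hi hh, hgh⟩

theorem singleton_zero_union_biUnion_of_forall_norm_le {s : Set ℕ} {G : ℕ → Set (M → E)}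
    (hG : ∀ k ∈ s, TotallyBoundedUniformlyOn K (G k))
    (hsmall : ∀ ε > 0, ∃ N, ∀ k ∈ s, N ≤ k → ∀ g ∈ G k, ∀ x ∈ K, ‖g x‖ ≤ ε) :
    TotallyBoundedUniformlyOn K ({0} ∪ ⋃ k ∈ s, G k) := by
  intro ε hε
  obtain ⟨N, hN⟩ := hsmall ε hε
  obtain ⟨S, hSfin, hS⟩ :=
    biUnion ((finite_Iio N).inter_of_right s) (fun k hk => hG k hk.1) ε hε
  refine ⟨insert 0 S, hSfin.insert 0, ?_⟩
  rintro g (rfl | hg)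
  · exact ⟨0, mem_insert _ _, fun x _ => by simpa using hε.le⟩
  obtain ⟨k, hk, hgk⟩ := mem_iUnion₂.1 hg
  rcases lt_or_ge k N with hkN | hNk
  · obtain ⟨h, hh, hgh⟩ := hS g (mem_biUnion ⟨hk, hkN⟩ hgk)
    exact ⟨h, mem_insert_of_mem _ hh, hgh⟩
  · exact ⟨0, mem_insert _ _, fun x hx => by simpa using hN k hk hNk g hgk x hx⟩

theorem range_of_equicontinuousAt {ι : Type*} [TopologicalSpace M] [ProperSpace E]
    (hK : IsCompact K) {F : ι → M → E} (heq : ∀ x ∈ K, EquicontinuousAt F x)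
    (hbd : ∀ x ∈ K, ∃ C, ∀ i, ‖F i x‖ ≤ C) :
    TotallyBoundedUniformlyOn K (range F) := by
  intro ε hε
  have hε3 : 0 < ε / 3 := by positivity
  obtain ⟨t, htK, hKt⟩ :=
    hK.elim_nhds_subcover (fun x => {y | ∀ i, dist (F i x) (F i y) < ε / 3})
      fun x hx => equicontinuousAt_iff_right.1 (heq x hx) _ hε3
  choose! C hC using hbd
  have htb : TotallyBounded (range fun i (j : t) => F i j) := by
    refine (isCompact_univ_pi fun j : t =>
      isCompact_closedBall (0 : E) (C j)).totallyBounded.subset ?_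
    rintro _ ⟨i, rfl⟩ j -
    simpa using hC j (htK j j.2) i
  obtain ⟨u, hu, hufin, hcov⟩ := finite_approx_of_totallyBounded htb _ hε3
  choose ψ hψ using fun v : u => hu v.2
  have := hufin.to_subtype
  refine ⟨range fun v : u => F (ψ v), finite_range _, ?_⟩
  rintro _ ⟨i, rfl⟩
  obtain ⟨v, hv, hiv⟩ := mem_iUnion₂.1 (hcov ⟨i, rfl⟩)
  set i' := ψ ⟨v, hv⟩
  have hvi' : (fun j : t => F i' j) = v := hψ ⟨v, hv⟩
  refine ⟨F i', mem_range_self _, fun x hx => ?_⟩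
  obtain ⟨j, hj, hxj⟩ := mem_iUnion₂.1 (hKt hx)
  have hij : dist (F i j) (F i' j) < ε / 3 :=
    (dist_le_pi_dist _ _ ⟨j, hj⟩).trans_lt (hvi' ▸ hiv)
  rw [← dist_eq_norm]
  calc dist (F i x) (F i' x)
      ≤ dist (F i x) (F i j) + dist (F i j) (F i' j) + dist (F i' j) (F i' x) :=
        dist_triangle4 _ _ _ _
    _ ≤ ε / 3 + ε / 3 + ε / 3 := by
        gcongr
        · rw [dist_comm]; exact (hxj i).le
        · exact (hxj i').le
    _ = ε := by ring

end TotallyBoundedUniformlyOn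

theorem EquicontinuousAt.sub {ι X G : Type*} [TopologicalSpace X] [UniformSpace G] [AddGroup G]
    [IsUniformAddGroup G] {F F' : ι → X → G} {x₀ : X} (hF : EquicontinuousAt F x₀)
    (hF' : EquicontinuousAt F' x₀) : EquicontinuousAt (F - F') x₀ := by
  rw [equicontinuousAt_iff_continuousAt] at *
  exact hF.sub hF'

theorem IsCompact.exists_forall_dist_lt_of_equicontinuousAt {X ι α : Type*} [PseudoMetricSpace X]
    [PseudoMetricSpace α] {K : Set X} (hK : IsCompact K) {F : ι → X → α}
    (hF : ∀ x ∈ K, EquicontinuousAt F x) {ε : ℝ} (hε : 0 < ε) :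
    ∃ δ > 0, ∀ x ∈ K, ∀ y, dist x y < δ → ∀ i, dist (F i x) (F i y) < ε := by
  have := hK.uniformContinuousAt_of_continuousAt (UniformFun.ofFun ∘ swap F)
    (fun x hx => equicontinuousAt_iff_continuousAt.1 (hF x hx))
    ((UniformFun.hasBasis_uniformity_of_basis ι α uniformity_basis_dist).mem_of_mem hε)
  obtain ⟨δ, hδ, hδK⟩ := mem_uniformity_dist.1 this
  exact ⟨δ, hδ, fun x hx y hxy => hδK hxy hx⟩

def PartitionOfUnity.ofFun {ι X : Type*} [TopologicalSpace X] (η : ι → X → ℝ)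
    (hcont : ∀ i, Continuous (η i)) (hnonneg : ∀ i x, 0 ≤ η i x)
    (hlf : LocallyFinite fun i => support (η i)) (hsum : ∀ x, ∑ᶠ i, η i x = 1) :
    PartitionOfUnity ι X where
  toFun i := ⟨η i, hcont i⟩
  locallyFinite' := hlf
  nonneg' i x := hnonneg i x
  sum_eq_one' x _ := hsum x
  sum_le_one' x := (hsum x).le

namespace PartitionOfUnity

variable {ι X E : Type*} [TopologicalSpace X] [SeminormedAddCommGroup E] [NormedSpace ℝ E]
  (ρ : PartitionOfUnity ι X)

theorem norm_finsum_smul_sub_le {g : ι → E} {c : E} {r : ℝ} {x : X}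
    (hg : ∀ i, ρ i x ≠ 0 → ‖g i - c‖ ≤ r) : ‖∑ᶠ i, ρ i x • g i - c‖ ≤ r :=
  mem_closedBall_iff_norm.1 <| ρ.finsum_smul_mem_convex (g := fun i _ => g i) (mem_univ x)
    (fun i hi => mem_closedBall_iff_norm.2 (hg i hi)) (convex_closedBall c r)

theorem exists_norm_finsum_smul_le {κ : Type*} {g : κ → ι → E}
    (hg : ∀ i, ∃ C, ∀ j, ‖g j i‖ ≤ C) (x : X) : ∃ C, ∀ j, ‖∑ᶠ i, ρ i x • g j i‖ ≤ C := by
  choose C hC using hg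
  refine ⟨∑ i ∈ ρ.finsupport x, |C i|, fun j => ?_⟩
  have hle : ∀ i, ρ i x ≠ 0 → ‖g j i - 0‖ ≤ ∑ i ∈ ρ.finsupport x, |C i| := fun i hi => by
    rw [sub_zero]
    exact (hC i j).trans <| (le_abs_self _).trans <|
      Finset.single_le_sum (fun i _ => abs_nonneg (C i)) ((ρ.mem_finsupport x).2 hi)
  simpa using ρ.norm_finsum_smul_sub_le hle

theorem equicontinuousAt_finsum_smul {κ : Type*} {g : κ → ι → E}
    (hg : ∀ i, ∃ C, ∀ j, ‖g j i‖ ≤ C) (x₀ : X) :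
    EquicontinuousAt (fun j x => ∑ᶠ i, ρ i x • g j i) x₀ := by
  rw [Metric.equicontinuousAt_iff_right]
  intro ε hε
  obtain ⟨I, hI⟩ := ρ.exists_finset_nhds x₀
  choose C hC using hg
  set φ : X → ℝ := fun x => ∑ i ∈ I, |ρ i x₀ - ρ i x| * C i
  have hφ : Tendsto φ (𝓝 x₀) (𝓝 0) := by
    have : Continuous φ := by fun_prop
    simpa [φ] using this.tendsto x₀
  have hsum_eq : ∀ x, support (ρ · x) ⊆ I → ∀ j,
      ∑ᶠ i, ρ i x • g j i = ∑ i ∈ I, ρ i x • g j i := fun x hx j =>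
    finsum_eq_sum_of_support_subset _ ((support_smul_subset_left (ρ · x) (g j)).trans hx)
  filter_upwards [hI, hφ.eventually (gt_mem_nhds hε)] with x hIx hφx j
  rw [hsum_eq x hIx.2, hsum_eq x₀ (hI.self_of_nhds).2, dist_eq_norm, ← Finset.sum_sub_distrib]
  calc ‖∑ i ∈ I, (ρ i x₀ • g j i - ρ i x • g j i)‖
      ≤ ∑ i ∈ I, ‖(ρ i x₀ - ρ i x) • g j i‖ := by
        simp_rw [sub_smul]; exact norm_sum_le _ _
    _ ≤ φ x := Finset.sum_le_sum fun i _ => by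
        rw [norm_smul, Real.norm_eq_abs]; exact mul_le_mul_of_nonneg_left (hC i j) (abs_nonneg _)
    _ < ε := hφx

end PartitionOfUnity

theorem PartitionOfUnity.totallyBoundedUniformlyOn_range_finsum_smul_sub {X E : Type*}
    [TopologicalSpace X] [SeminormedAddCommGroup E] [NormedSpace ℝ E] [ProperSpace E]
    (ρ : PartitionOfUnity X X) {K : Set X} (hK : IsCompact K) {κ : Type*} {F : κ → X → E}
    (heq : ∀ x ∈ K, EquicontinuousAt F x) (hbd : ∀ x, ∃ C, ∀ j, ‖F j x‖ ≤ C) :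
    TotallyBoundedUniformlyOn K (range fun j => (fun x => ∑ᶠ t, ρ t x • F j t) - F j) := by
  refine TotallyBoundedUniformlyOn.range_of_equicontinuousAt hK
    (fun x hx => (ρ.equicontinuousAt_finsum_smul hbd x).sub (heq x hx)) fun x _ => ?_
  obtain ⟨C, hC⟩ := ρ.exists_norm_finsum_smul_le hbd x
  obtain ⟨C', hC'⟩ := hbd x
  exact ⟨C + C', fun j => (norm_sub_le _ _).trans (add_le_add (hC j) (hC' j))⟩

theorem union_of_differences_totallyBounded_general
    {M : Type*} [MetricSpace M] (η : ℕ → M → M → ℝ)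
    (hcont : ∀ k, 1 ≤ k → ∀ t, Continuous (η k t))
    (hnonneg : ∀ k, 1 ≤ k → ∀ t x, 0 ≤ η k t x)
    (hlf : ∀ k, 1 ≤ k → LocallyFinite fun t => Function.support (η k t))
    (hsum : ∀ k, 1 ≤ k → ∀ x, ∑ᶠ t, η k t x = 1)
    (hsupp : ∀ k, 1 ≤ k → ∀ t, Function.support (η k t) ⊆ Metric.ball t (1 / (k : ℝ)))
    (F : Set (M → ℂ))
    (hEq : ∀ K : Set M, IsCompact K → ∀ x ∈ K,
      EquicontinuousAt (fun f : F => (f : M → ℂ)) x)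
    (hBd : ∀ K : Set M, IsCompact K → ∃ C : ℝ, ∀ f ∈ F, ∀ x ∈ K, ‖f x‖ ≤ C) :
    ∀ K : Set M, IsCompact K → ∀ ε > (0 : ℝ), ∃ S : Set (M → ℂ), S.Finite ∧
      ∀ g ∈ ({0} ∪ ⋃ k ∈ {k : ℕ | 1 ≤ k},
          (fun f : M → ℂ => (fun x => ∑ᶠ t, f t * (η k t x : ℂ)) - f) '' F :
          Set (M → ℂ)),
        ∃ h ∈ S, ∀ x ∈ K, ‖g x - h x‖ ≤ ε := by
  intro K hK
  let ρ (k : ℕ) (hk : 1 ≤ k) : PartitionOfUnity M M :=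
    .ofFun (η k) (hcont k hk) (hnonneg k hk) (hlf k hk) (hsum k hk)
  have hsmul (k : ℕ) (f : M → ℂ) (x : M) :
      ∑ᶠ t, f t * (η k t x : ℂ) = ∑ᶠ t, η k t x • f t :=
    finsum_congr fun t => by rw [Complex.real_smul, mul_comm]
  have hFbd (x : M) : ∃ C, ∀ f : F, ‖(f : M → ℂ) x‖ ≤ C :=
    (hBd {x} isCompact_singleton).imp fun C hC f => hC f f.2 x rfl
  simp only [hsmul]
  refine TotallyBoundedUniformlyOn.singleton_zero_union_biUnion_of_forall_norm_le
    (fun k hk => ?_) fun ε hε => ?_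
  · rw [image_eq_range]
    exact (ρ k hk).totallyBoundedUniformlyOn_range_finsum_smul_sub hK (hEq K hK) hFbd
  · obtain ⟨δ, hδ, hFδ⟩ := hK.exists_forall_dist_lt_of_equicontinuousAt (hEq K hK) hε
    obtain ⟨N, hN⟩ := exists_nat_one_div_lt hδ
    refine ⟨N + 1, fun k hk hNk => ?_⟩
    rintro _ ⟨f, hf, rfl⟩ x hx
    refine (ρ k hk).norm_finsum_smul_sub_le fun t ht => ?_
    have hxt : dist x t < δ := calc
      dist x t < 1 / (k : ℝ) := hsupp k hk t ht
      _ ≤ 1 / ((N : ℝ) + 1) := by gcongr; exact_mod_cast hNk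
      _ < δ := hN
    rw [← dist_eq_norm, dist_comm]
    exact (hFδ x hx t hxt ⟨f, hf⟩).le

/-- If `F` is equicontinuous and uniformly bounded on each compact subset of `M`, and
`P^k f x = ∑ t, f t * η^k t x` comes from locally finite partitions of unity
subordinated to the covers by balls of radius `1/k`, then the set
`⋃_{k ≥ 1} {P^k f − f : f ∈ F} ∪ {0}` is totally bounded for the topology of uniform
convergence on compact sets. -/
theorem union_of_differences_totallyBounded
    {M : Type*} [MetricSpace M] (η : ℕ → M → M → ℝ)
    (hcont : ∀ k, 1 ≤ k → ∀ t, Continuous (η k t))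
    (hnonneg : ∀ k, 1 ≤ k → ∀ t x, 0 ≤ η k t x)
    (hle : ∀ k, 1 ≤ k → ∀ t x, η k t x ≤ 1)
    (hlf : ∀ k, 1 ≤ k → LocallyFinite fun t => Function.support (η k t))
    (hsum : ∀ k, 1 ≤ k → ∀ x, ∑ᶠ t, η k t x = 1)
    (hsupp : ∀ k, 1 ≤ k → ∀ t, Function.support (η k t) ⊆ Metric.ball t (1 / (k : ℝ)))
    (F : Set (M → ℂ)) (hFc : ∀ f ∈ F, Continuous f)
    (hEq : ∀ K : Set M, IsCompact K → ∀ x ∈ K,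
      EquicontinuousAt (fun f : F => (f : M → ℂ)) x)
    (hBd : ∀ K : Set M, IsCompact K → ∃ C : ℝ, ∀ f ∈ F, ∀ x ∈ K, ‖f x‖ ≤ C) :
    ∀ K : Set M, IsCompact K → ∀ ε > (0 : ℝ), ∃ S : Set (M → ℂ), S.Finite ∧
      ∀ g ∈ ({0} ∪ ⋃ k ∈ {k : ℕ | 1 ≤ k},
          (fun f : M → ℂ => (fun x => ∑ᶠ t, f t * (η k t x : ℂ)) - f) '' F :
          Set (M → ℂ)),
        ∃ h ∈ S, ∀ x ∈ K, ‖g x - h x‖ ≤ ε :=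
  union_of_differences_totallyBounded_general η hcont hnonneg hlf hsum hsupp F hEq hBd
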